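/- arXiv:1801.01962 — 2 statements merged into one kernel-verified Lean document; each statement's English description precedes it below -/
import Mathlib

section
/- Let f : [-1,1]² → ℝ satisfy |f(x,y) - f(x₁,y₁)| ≤ C₁|x-x₁| + C₂|y-y₁| for all (x,y),(x₁,y₁) ∈ [-1,1]² with constants C₁, C₂ < ∞. Define g(x,y) = f(x,y)(1-x²)^{1/4}(1-y²)^{1/4}. Then there exists K < ∞ such that |g(x,y) - g(x₁,y₁)| ≤ K·ρ^{1/4} for all (x,y),(x₁,y₁) ∈ [-1,1]², where ρ = √((x-x₁)² + (y-y₁)²). -/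
private lemma rpow_add_le_add_rpow_real (a b p : ℝ) (ha : 0 ≤ a) (hb : 0 ≤ b)
    (hp : 0 ≤ p) (hp1 : p ≤ 1) : (a + b) ^ p ≤ a ^ p + b ^ p := by
  have h := NNReal.rpow_add_le_add_rpow a.toNNReal b.toNNReal hp hp1
  rw [← Real.toNNReal_add ha hb] at h
  have h2 := NNReal.coe_le_coe.mpr h
  rwa [NNReal.coe_add, NNReal.coe_rpow, NNReal.coe_rpow, NNReal.coe_rpow,
    Real.coe_toNNReal _ (by linarith), Real.coe_toNNReal a ha, Real.coe_toNNReal b hb] at h2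

private lemma abs_rpow_quarter_sub (a b : ℝ) (ha : 0 ≤ a) (hb : 0 ≤ b) :
    |a ^ ((1:ℝ)/4) - b ^ ((1:ℝ)/4)| ≤ |a - b| ^ ((1:ℝ)/4) := by
  wlog hab : b ≤ a generalizing a b
  · rw [abs_sub_comm, abs_sub_comm a b]; exact this b a hb ha (le_of_not_ge hab)
  have h1 : b ^ ((1:ℝ)/4) ≤ a ^ ((1:ℝ)/4) := Real.rpow_le_rpow hb hab (by norm_num)
  rw [abs_of_nonneg (sub_nonneg.mpr h1), abs_of_nonneg (sub_nonneg.mpr hab)]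
  have key : a ^ ((1:ℝ)/4) ≤ (a - b) ^ ((1:ℝ)/4) + b ^ ((1:ℝ)/4) := by
    have := rpow_add_le_add_rpow_real (a - b) b ((1:ℝ)/4)
      (sub_nonneg.mpr hab) hb (by norm_num) (by norm_num)
    rwa [sub_add_cancel] at this
  linarith

private lemma le_three_rpow_quarter (r : ℝ) (h0 : 0 ≤ r) (h3 : r ≤ 3) :
    r ≤ 3 * r ^ ((1:ℝ)/4) := by
  rcases h0.eq_or_lt with rfl | hpos
  · simp [Real.zero_rpow]
  have hr : r = r ^ ((3:ℝ)/4) * r ^ ((1:ℝ)/4) := by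
    rw [← Real.rpow_add hpos]; norm_num
  nth_rewrite 1 [hr]
  have h34 : r ^ ((3:ℝ)/4) ≤ 3 := by
    calc r ^ ((3:ℝ)/4) ≤ 3 ^ ((3:ℝ)/4) := Real.rpow_le_rpow h0 h3 (by norm_num)
    _ ≤ 3 ^ (1:ℝ) := Real.rpow_le_rpow_of_exponent_le (by norm_num) (by norm_num)
    _ = 3 := Real.rpow_one 3
  exact mul_le_mul_of_nonneg_right h34 (Real.rpow_nonneg hpos.le _)

theorem weighted_holder_quarter (f : ℝ → ℝ → ℝ) (C₁ C₂ : ℝ)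
    (hf : ∀ x y x₁ y₁ : ℝ, x ∈ Set.Icc (-1 : ℝ) 1 → y ∈ Set.Icc (-1 : ℝ) 1 →
      x₁ ∈ Set.Icc (-1 : ℝ) 1 → y₁ ∈ Set.Icc (-1 : ℝ) 1 →
      |f x y - f x₁ y₁| ≤ C₁ * |x - x₁| + C₂ * |y - y₁|)
    (g : ℝ → ℝ → ℝ)
    (hg : ∀ x y : ℝ, g x y = f x y * (1 - x^2) ^ ((1 : ℝ)/4) * (1 - y^2) ^ ((1 : ℝ)/4)) :
    ∃ K : ℝ, ∀ x y x₁ y₁ : ℝ, x ∈ Set.Icc (-1 : ℝ) 1 → y ∈ Set.Icc (-1 : ℝ) 1 →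
      x₁ ∈ Set.Icc (-1 : ℝ) 1 → y₁ ∈ Set.Icc (-1 : ℝ) 1 →
      |g x y - g x₁ y₁| ≤ K * (Real.sqrt ((x - x₁)^2 + (y - y₁)^2)) ^ ((1 : ℝ)/4) := by
  have h01 : (0:ℝ) ∈ Set.Icc (-1:ℝ) 1 := by constructor <;> norm_num
  have hC₁ : 0 ≤ C₁ := by
    have := hf 1 0 0 0 (by constructor <;> norm_num) h01 h01 h01
    have h0 : (0:ℝ) ≤ |f 1 0 - f 0 0| := abs_nonneg _
    simp only [sub_zero, abs_one, abs_zero] at this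
    linarith
  have hC₂ : 0 ≤ C₂ := by
    have := hf 0 1 0 0 h01 (by constructor <;> norm_num) h01 h01
    have h0 : (0:ℝ) ≤ |f 0 1 - f 0 0| := abs_nonneg _
    simp only [sub_zero, abs_one, abs_zero] at this
    linarith
  set M : ℝ := |f 0 0| + C₁ + C₂ with hM
  have hMbd : ∀ x y : ℝ, x ∈ Set.Icc (-1:ℝ) 1 → y ∈ Set.Icc (-1:ℝ) 1 → |f x y| ≤ M := by
    intro x y hx hy
    have h := hf x y 0 0 hx hy h01 h01
    have hax : |x| ≤ 1 := abs_le.mpr hx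
    have hay : |y| ≤ 1 := abs_le.mpr hy
    have := abs_sub_abs_le_abs_sub (f x y) (f 0 0)
    simp only [sub_zero] at h
    nlinarith [abs_nonneg x, abs_nonneg y]
  refine ⟨3*C₁ + 3*C₂ + 4*M, ?_⟩
  intro x y x₁ y₁ hx hy hx₁ hy₁
  set ρ := Real.sqrt ((x - x₁)^2 + (y - y₁)^2) with hρ
  have hρ0 : 0 ≤ ρ := Real.sqrt_nonneg _
  have hsq : ∀ z : ℝ, z ∈ Set.Icc (-1:ℝ) 1 → 0 ≤ 1 - z^2 ∧ 1 - z^2 ≤ 1 := by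
    intro z hz
    have := abs_le.mpr hz
    constructor <;> nlinarith [sq_abs z, abs_nonneg z]
  have hw : ∀ z : ℝ, z ∈ Set.Icc (-1:ℝ) 1 →
      0 ≤ (1 - z^2) ^ ((1:ℝ)/4) ∧ (1 - z^2) ^ ((1:ℝ)/4) ≤ 1 := by
    intro z hz
    obtain ⟨h1, h2⟩ := hsq z hz
    exact ⟨Real.rpow_nonneg h1 _, Real.rpow_le_one h1 h2 (by norm_num)⟩
  -- |dx| ≤ ρ, |dy| ≤ ρ
  have hdx : |x - x₁| ≤ ρ := by
    rw [hρ, ← Real.sqrt_sq_eq_abs]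
    exact Real.sqrt_le_sqrt (by nlinarith [sq_nonneg (y - y₁)])
  have hdy : |y - y₁| ≤ ρ := by
    rw [hρ, ← Real.sqrt_sq_eq_abs]
    exact Real.sqrt_le_sqrt (by nlinarith [sq_nonneg (x - x₁)])
  have hρ3 : ρ ≤ 3 := by
    rw [hρ]
    have hax : |x - x₁| ≤ 2 := by
      have h1 := abs_le.mpr hx; have h2 := abs_le.mpr hx₁
      calc |x - x₁| ≤ |x| + |x₁| := abs_sub _ _
      _ ≤ 2 := by linarith
    have hay : |y - y₁| ≤ 2 := by
      have h1 := abs_le.mpr hy; have h2 := abs_le.mpr hy₁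
      calc |y - y₁| ≤ |y| + |y₁| := abs_sub _ _
      _ ≤ 2 := by linarith
    have : (x - x₁)^2 + (y - y₁)^2 ≤ 9 := by
      nlinarith [sq_abs (x - x₁), sq_abs (y - y₁), abs_nonneg (x - x₁), abs_nonneg (y - y₁)]
    calc Real.sqrt ((x - x₁)^2 + (y - y₁)^2) ≤ Real.sqrt 9 := Real.sqrt_le_sqrt this
    _ = 3 := by rw [show (9:ℝ) = 3^2 by norm_num, Real.sqrt_sq (by norm_num)]
  have hρp : ρ ≤ 3 * ρ ^ ((1:ℝ)/4) := le_three_rpow_quarter ρ hρ0 hρ3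
  have hρp0 : 0 ≤ ρ ^ ((1:ℝ)/4) := Real.rpow_nonneg hρ0 _
  -- Hölder bound on weights
  have hwdiff : ∀ z z₁ : ℝ, z ∈ Set.Icc (-1:ℝ) 1 → z₁ ∈ Set.Icc (-1:ℝ) 1 → |z - z₁| ≤ ρ →
      |(1 - z^2) ^ ((1:ℝ)/4) - (1 - z₁^2) ^ ((1:ℝ)/4)| ≤ 2 * ρ ^ ((1:ℝ)/4) := by
    intro z z₁ hz hz₁ hd
    obtain ⟨h1, _⟩ := hsq z hz
    obtain ⟨h1', _⟩ := hsq z₁ hz₁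
    calc |(1 - z^2) ^ ((1:ℝ)/4) - (1 - z₁^2) ^ ((1:ℝ)/4)|
        ≤ |(1 - z^2) - (1 - z₁^2)| ^ ((1:ℝ)/4) := abs_rpow_quarter_sub _ _ h1 h1'
      _ ≤ (2 * ρ) ^ ((1:ℝ)/4) := by
          apply Real.rpow_le_rpow (abs_nonneg _) _ (by norm_num)
          have hz2 : |(1 - z^2) - (1 - z₁^2)| = |z - z₁| * |z + z₁| := by
            rw [show (1 - z^2) - (1 - z₁^2) = -((z - z₁) * (z + z₁)) by ring, abs_neg, abs_mul]
          have haz : |z| ≤ 1 := abs_le.mpr hz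
          have haz₁ : |z₁| ≤ 1 := abs_le.mpr hz₁
          have hsum : |z + z₁| ≤ 2 := by
            calc |z + z₁| ≤ |z| + |z₁| := abs_add_le _ _
            _ ≤ 2 := by linarith
          rw [hz2]
          calc |z - z₁| * |z + z₁| ≤ |z - z₁| * 2 :=
                mul_le_mul_of_nonneg_left hsum (abs_nonneg _)
            _ ≤ ρ * 2 := mul_le_mul_of_nonneg_right hd (by norm_num)
            _ = 2 * ρ := by ring
      _ ≤ 2 * ρ ^ ((1:ℝ)/4) := by
          rw [Real.mul_rpow (by norm_num) hρ0]
          apply mul_le_mul_of_nonneg_right _ hρp0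
          calc (2:ℝ) ^ ((1:ℝ)/4) ≤ 2 ^ (1:ℝ) :=
                Real.rpow_le_rpow_of_exponent_le (by norm_num) (by norm_num)
            _ = 2 := Real.rpow_one 2
  set wx := (1 - x^2) ^ ((1:ℝ)/4)
  set wy := (1 - y^2) ^ ((1:ℝ)/4)
  set wx₁ := (1 - x₁^2) ^ ((1:ℝ)/4)
  set wy₁ := (1 - y₁^2) ^ ((1:ℝ)/4)
  obtain ⟨hwx0, hwx1⟩ := hw x hx
  obtain ⟨hwy0, hwy1⟩ := hw y hy
  obtain ⟨hwx₁0, hwx₁1⟩ := hw x₁ hx₁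
  obtain ⟨hwy₁0, hwy₁1⟩ := hw y₁ hy₁
  have hdecomp : g x y - g x₁ y₁ =
      (f x y - f x₁ y₁) * wx * wy + f x₁ y₁ * ((wx - wx₁) * wy + wx₁ * (wy - wy₁)) := by
    rw [hg x y, hg x₁ y₁]; ring
  rw [hdecomp]
  have hfM := hMbd x₁ y₁ hx₁ hy₁
  have hflip := hf x y x₁ y₁ hx hy hx₁ hy₁
  have hM0 : 0 ≤ M := le_trans (abs_nonneg _) hfM
  have t1 : |(f x y - f x₁ y₁) * wx * wy| ≤ (3*C₁ + 3*C₂) * ρ ^ ((1:ℝ)/4) := by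
    rw [abs_mul, abs_mul, abs_of_nonneg hwx0, abs_of_nonneg hwy0]
    calc |f x y - f x₁ y₁| * wx * wy ≤ |f x y - f x₁ y₁| * 1 * 1 := by
          apply mul_le_mul _ hwy1 hwy0 (by positivity)
          exact mul_le_mul_of_nonneg_left hwx1 (abs_nonneg _)
      _ = |f x y - f x₁ y₁| := by ring
      _ ≤ C₁ * |x - x₁| + C₂ * |y - y₁| := hflip
      _ ≤ C₁ * ρ + C₂ * ρ := by
          have := mul_le_mul_of_nonneg_left hdx hC₁
          have := mul_le_mul_of_nonneg_left hdy hC₂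
          linarith
      _ ≤ C₁ * (3 * ρ ^ ((1:ℝ)/4)) + C₂ * (3 * ρ ^ ((1:ℝ)/4)) := by
          have := mul_le_mul_of_nonneg_left hρp hC₁
          have := mul_le_mul_of_nonneg_left hρp hC₂
          linarith
      _ = (3*C₁ + 3*C₂) * ρ ^ ((1:ℝ)/4) := by ring
  have t2 : |f x₁ y₁ * ((wx - wx₁) * wy + wx₁ * (wy - wy₁))| ≤ 4*M * ρ ^ ((1:ℝ)/4) := by
    rw [abs_mul]
    have hwxd := hwdiff x x₁ hx hx₁ hdx
    have hwyd := hwdiff y y₁ hy hy₁ hdy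
    have hin : |(wx - wx₁) * wy + wx₁ * (wy - wy₁)| ≤ 4 * ρ ^ ((1:ℝ)/4) := by
      calc |(wx - wx₁) * wy + wx₁ * (wy - wy₁)|
          ≤ |(wx - wx₁) * wy| + |wx₁ * (wy - wy₁)| := abs_add_le _ _
        _ = |wx - wx₁| * wy + wx₁ * |wy - wy₁| := by
            rw [abs_mul, abs_mul, abs_of_nonneg hwy0, abs_of_nonneg hwx₁0]
        _ ≤ |wx - wx₁| * 1 + 1 * |wy - wy₁| := by
            have := mul_le_mul_of_nonneg_left hwy1 (abs_nonneg (wx - wx₁))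
            have := mul_le_mul_of_nonneg_right hwx₁1 (abs_nonneg (wy - wy₁))
            linarith
        _ = |wx - wx₁| + |wy - wy₁| := by ring
        _ ≤ 2 * ρ ^ ((1:ℝ)/4) + 2 * ρ ^ ((1:ℝ)/4) := by linarith
        _ = 4 * ρ ^ ((1:ℝ)/4) := by ring
    calc |f x₁ y₁| * |(wx - wx₁) * wy + wx₁ * (wy - wy₁)|
        ≤ M * (4 * ρ ^ ((1:ℝ)/4)) := mul_le_mul hfM hin (abs_nonneg _) hM0
      _ = 4*M * ρ ^ ((1:ℝ)/4) := by ring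
  calc |(f x y - f x₁ y₁) * wx * wy + f x₁ y₁ * ((wx - wx₁) * wy + wx₁ * (wy - wy₁))|
      ≤ |(f x y - f x₁ y₁) * wx * wy| + |f x₁ y₁ * ((wx - wx₁) * wy + wx₁ * (wy - wy₁))| :=
        abs_add_le _ _
    _ ≤ (3*C₁ + 3*C₂) * ρ ^ ((1:ℝ)/4) + 4*M * ρ ^ ((1:ℝ)/4) := by linarith
    _ = (3*C₁ + 3*C₂ + 4*M) * ρ ^ ((1:ℝ)/4) := by ring
end

section
/- For every y ≠ 1, (n+1)(P_{n+1}(y) - P_n(y))/(y - 1) = (P_n(y) + P_{n+1}(y))', where P_j denotes the j-th Legendre polynomial. -/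
/-!
Write `u n = (X² - 1)ⁿ`, so that `Pₙ = cₙ Dⁿ (u n)` with `cₙ = (2ⁿ n!)⁻¹` and
`D (u (n+1)) = 2(n+1) X u n`. Leibniz's rule for the factor `X` then gives
`P'ₙ₊₁ = X P'ₙ + (n+1) Pₙ` and `Pₙ₊₁ - X Pₙ = n cₙ Dⁿ⁻¹ (u n)`.
Differentiating `(X² - 1) D (u n) = 2n X (u n)` `n + 1` times gives the Legendre
equation `((X² - 1) Dⁿ⁺¹ (u n))' = n(n+1) Dⁿ (u n)`. Integrating it once, using that
`X² - 1` divides `Dⁿ⁻¹ (u n)` so that both sides vanish at `1`, yields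
`(X² - 1) P'ₙ = (n+1)(Pₙ₊₁ - X Pₙ)`. Hence
`(X - 1)(Pₙ + Pₙ₊₁)' = (X² - 1) P'ₙ + (X - 1)(X P'ₙ + (n+1) Pₙ) = (n+1)(Pₙ₊₁ - Pₙ)`.
-/

open Polynomial

/-- The `n`-th Legendre polynomial via the Rodrigues formula. -/
noncomputable def legendre (n : ℕ) : Polynomial ℝ :=
  C ((2 ^ n * n.factorial : ℝ)⁻¹) * derivative^[n] ((X ^ 2 - 1) ^ n)

namespace Polynomial

theorem eq_of_derivative_eq_of_eval_eq {R : Type*} [Ring R] [IsAddTorsionFree R] {p q : R[X]}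
    (a : R) (hd : derivative p = derivative q) (ha : p.eval a = q.eval a) : p = q := by
  have hc : p - q = C ((p - q).coeff 0) :=
    eq_C_of_derivative_eq_zero (by rw [derivative_sub, hd, sub_self])
  have h0 : (p - q).coeff 0 = 0 := by
    simpa [ha] using (congrArg (eval a) hc).symm
  rw [h0, map_zero] at hc
  exact sub_eq_zero.mp hc

variable {R : Type*} [CommRing R]

theorem iterate_derivative_X_sq_sub_one_mul (k : ℕ) (p : R[X]) :
    derivative^[k + 2] ((X ^ 2 - 1) * p) =
      (X ^ 2 - 1) * derivative^[k + 2] p + 2 * ((k : R[X]) + 2) * X * derivative^[k + 1] p +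
        ((k : R[X]) + 2) * ((k : R[X]) + 1) * derivative^[k] p := by
  have h : (X ^ 2 - 1) * p = p * X * X - p := by ring
  rw [h, iterate_derivative_sub]
  simp only [iterate_derivative_mul_X, nsmul_eq_mul, show k + 2 - 1 = k + 1 by omega,
    Nat.add_sub_cancel]
  push_cast
  ring

theorem derivative_X_sq_sub_one_pow_succ (n : ℕ) :
    derivative ((X ^ 2 - 1 : R[X]) ^ (n + 1)) =
      ((2 * (n + 1) : ℕ) : R[X]) * (X * (X ^ 2 - 1) ^ n) := by
  rw [derivative_pow]
  simp
  ring

theorem X_sq_sub_one_mul_derivative_X_sq_sub_one_pow (n : ℕ) :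
    (X ^ 2 - 1) * derivative ((X ^ 2 - 1 : R[X]) ^ n) =
      ((2 * n : ℕ) : R[X]) * (X * (X ^ 2 - 1) ^ n) := by
  cases n with
  | zero => simp
  | succ n => rw [derivative_X_sq_sub_one_pow_succ]; ring

theorem iterate_derivative_succ_X_sq_sub_one_pow_succ (n k : ℕ) :
    derivative^[k + 1] ((X ^ 2 - 1 : R[X]) ^ (n + 1)) =
      2 * ((n : R[X]) + 1) *
        (derivative^[k] ((X ^ 2 - 1) ^ n) * X +
          (k : R[X]) * derivative^[k - 1] ((X ^ 2 - 1) ^ n)) := by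
  rw [Function.iterate_succ_apply, derivative_X_sq_sub_one_pow_succ,
    iterate_derivative_natCast_mul, mul_comm X, iterate_derivative_mul_X, nsmul_eq_mul]
  push_cast
  ring

theorem X_sq_sub_one_mul_iterate_derivative_add_three_X_sq_sub_one_pow (n : ℕ) :
    (X ^ 2 - 1) * derivative^[n + 3] ((X ^ 2 - 1 : R[X]) ^ (n + 1)) +
        2 * X * derivative^[n + 2] ((X ^ 2 - 1) ^ (n + 1)) =
      ((n : R[X]) + 1) * ((n : R[X]) + 2) * derivative^[n + 1] ((X ^ 2 - 1) ^ (n + 1)) := by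
  have h := congrArg (derivative^[n + 2])
    (X_sq_sub_one_mul_derivative_X_sq_sub_one_pow (R := R) (n + 1))
  rw [iterate_derivative_X_sq_sub_one_mul, iterate_derivative_natCast_mul, mul_comm X,
    iterate_derivative_mul_X] at h
  simp only [← Function.iterate_succ_apply, nsmul_eq_mul, add_assoc] at h
  push_cast at h
  linear_combination h

theorem X_sq_sub_one_mul_iterate_derivative_add_two_X_sq_sub_one_pow [IsAddTorsionFree R]
    (n : ℕ) :
    (X ^ 2 - 1) * derivative^[n + 2] ((X ^ 2 - 1 : R[X]) ^ (n + 1)) =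
      ((n : R[X]) + 1) * ((n : R[X]) + 2) * derivative^[n] ((X ^ 2 - 1) ^ (n + 1)) := by
  refine eq_of_derivative_eq_of_eval_eq 1 ?_ ?_
  · rw [derivative_mul, derivative_mul, ← Function.iterate_succ_apply' derivative (n + 2),
      ← Function.iterate_succ_apply' derivative n]
    simp only [derivative_sub, derivative_X_pow, derivative_one, derivative_add, derivative_mul,
      derivative_natCast, derivative_ofNat, Nat.cast_ofNat, map_ofNat]
    linear_combination X_sq_sub_one_mul_iterate_derivative_add_three_X_sq_sub_one_pow (R := R) n
  · obtain ⟨q, hq⟩ := pow_sub_dvd_iterate_derivative_pow (X ^ 2 - 1 : R[X]) (n + 1) n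
    rw [Nat.add_sub_cancel_left, pow_one] at hq
    simp [hq]

end Polynomial

theorem inv_two_pow_succ_mul_factorial_succ_mul (n : ℕ) :
    (2 ^ (n + 1) * (n + 1).factorial : ℝ)⁻¹ * (2 * ((n : ℝ) + 1)) =
      (2 ^ n * n.factorial : ℝ)⁻¹ := by
  rw [Nat.factorial_succ]
  push_cast
  field_simp
  ring

theorem legendre_succ (n : ℕ) :
    legendre (n + 1) = legendre n * X +
      C ((2 ^ n * n.factorial : ℝ)⁻¹) *
        ((n : ℝ[X]) * derivative^[n - 1] ((X ^ 2 - 1) ^ n)) := by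
  have hc := congrArg C (inv_two_pow_succ_mul_factorial_succ_mul n)
  simp only [map_mul, map_add, map_natCast, map_one, map_ofNat] at hc
  unfold legendre
  rw [iterate_derivative_succ_X_sq_sub_one_pow_succ]
  linear_combination (derivative^[n] ((X ^ 2 - 1 : ℝ[X]) ^ n) * X +
    (n : ℝ[X]) * derivative^[n - 1] ((X ^ 2 - 1) ^ n)) * hc

theorem derivative_legendre_succ (n : ℕ) :
    derivative (legendre (n + 1)) =
      derivative (legendre n) * X + ((n : ℝ[X]) + 1) * legendre n := by
  have hc := congrArg C (inv_two_pow_succ_mul_factorial_succ_mul n)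
  simp only [map_mul, map_add, map_natCast, map_one, map_ofNat] at hc
  unfold legendre
  rw [derivative_C_mul, derivative_C_mul, ← Function.iterate_succ_apply' derivative (n + 1),
    ← Function.iterate_succ_apply' derivative n, iterate_derivative_succ_X_sq_sub_one_pow_succ,
    Nat.add_sub_cancel]
  push_cast
  linear_combination (derivative^[n + 1] ((X ^ 2 - 1 : ℝ[X]) ^ n) * X +
    ((n : ℝ[X]) + 1) * derivative^[n] ((X ^ 2 - 1) ^ n)) * hc

theorem X_sq_sub_one_mul_derivative_legendre (n : ℕ) :
    (X ^ 2 - 1) * derivative (legendre n) =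
      ((n : ℝ[X]) + 1) * (legendre (n + 1) - legendre n * X) := by
  rw [legendre_succ]
  cases n with
  | zero => simp [legendre]
  | succ m =>
    rw [legendre, derivative_C_mul, ← Function.iterate_succ_apply' derivative,
      Nat.add_sub_cancel]
    push_cast
    linear_combination C ((2 ^ (m + 1) * (m + 1).factorial : ℝ)⁻¹) *
      X_sq_sub_one_mul_iterate_derivative_add_two_X_sq_sub_one_pow (R := ℝ) m

theorem X_sub_one_mul_derivative_legendre_add_legendre_succ (n : ℕ) :
    (X - 1) * derivative (legendre n + legendre (n + 1)) =
      ((n : ℝ[X]) + 1) * (legendre (n + 1) - legendre n) := by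
  rw [derivative_add]
  linear_combination (X - 1) * derivative_legendre_succ n + X_sq_sub_one_mul_derivative_legendre n

theorem legendre_diff_quotient_one (n : ℕ) (y : ℝ) (hy : y ≠ 1) :
    ((n : ℝ) + 1) * ((legendre (n + 1)).eval y - (legendre n).eval y) / (y - 1) =
      (derivative (legendre n + legendre (n + 1))).eval y := by
  have h := congrArg (eval y) (X_sub_one_mul_derivative_legendre_add_legendre_succ n)
  simp only [eval_mul, eval_sub, eval_add, eval_X, eval_one, eval_natCast] at h
  rw [div_eq_iff (sub_ne_zero_of_ne hy), ← h, mul_comm]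
end
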